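/- Let D = conv{0, e₁, e₂, e₃, e₁+e₃, e₂+e₃} ⊆ ℝ³ be the triangular prism over the triangle conv{0, e₁, e₂}. Then the Lebesgue volume of the difference body D + (−D) equals 6. -/

import Mathlib

/-!
Reorder the coordinates as `x ↦ (x₂, (x₀, x₁))`, a volume-preserving linear equivalence
`ℝ³ ≃ ℝ × ℝ²`. It carries the prism to the product `[0, 1] × T` of a segment and the triangle
`T = conv {0, e₁, e₂}`, and the difference body of a product is the product of the difference
bodies. So the difference body is `[-1, 1] × H`, where `H = T - T` is the hexagon
`|x| ≤ 1, |y| ≤ 1, |x + y| ≤ 1`. The slice of `H` over `x ∈ [-1, 1]` has length `2 - |x|`, so `H`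
has area `3` and the difference body has volume `2 * 3 = 6`.
-/

open Pointwise MeasureTheory

/-- The standard basis vector `eᵢ` of `ℝ³`. -/
noncomputable def stdVec (i : Fin 3) : EuclideanSpace ℝ (Fin 3) :=
  EuclideanSpace.single i (1 : ℝ)

/-- The triangular prism `conv {0, e₁, e₂, e₃, e₁+e₃, e₂+e₃} ⊆ ℝ³` over the
triangle `conv {0, e₁, e₂}`. -/
noncomputable def stdPrism : Set (EuclideanSpace ℝ (Fin 3)) :=
  convexHull ℝ {0, stdVec 0, stdVec 1, stdVec 2, stdVec 0 + stdVec 2, stdVec 1 + stdVec 2}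

open Set

lemma IsLinearMap.image_add_neg {R E F : Type*} [Semiring R] [AddCommGroup E] [AddCommGroup F]
    [Module R E] [Module R F] {f : E → F} (hf : IsLinearMap R f) (s : Set E) :
    f '' (s + -s) = f '' s + -(f '' s) :=
  (image_add (hf.mk' f)).trans (congrArg _ (image_neg (hf.mk' f) s))

lemma prod_add_neg_prod {α β : Type*} [AddGroup α] [AddGroup β] (s : Set α) (t : Set β) :
    s ×ˢ t + -(s ×ˢ t) = (s + -s) ×ˢ (t + -t) := by
  rw [neg_prod, prod_add_prod_comm]

lemma Icc_add_neg_Icc {α : Type*} [AddCommGroup α] [LinearOrder α] [IsOrderedAddMonoid α]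
    {a b : α} (h : a ≤ b) : Icc a b + -Icc a b = Icc (a - b) (b - a) := by
  rw [neg_Icc, Icc_add_Icc h (neg_le_neg h), sub_eq_add_neg, sub_eq_add_neg]

def unitTriangle : Set (ℝ × ℝ) := {p | 0 ≤ p.1 ∧ 0 ≤ p.2 ∧ p.1 + p.2 ≤ 1}

def hexagon : Set (ℝ × ℝ) := {p | |p.1| ≤ 1 ∧ |p.2| ≤ 1 ∧ |p.1 + p.2| ≤ 1}

lemma convexHull_triangle_eq_unitTriangle :
    convexHull ℝ {((0 : ℝ), (0 : ℝ)), (1, 0), (0, 1)} = unitTriangle := by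
  apply Subset.antisymm
  · refine convexHull_min (by simp [insert_subset_iff, unitTriangle]) ?_
    rintro x ⟨hx1, hx2, hx3⟩ y ⟨hy1, hy2, hy3⟩ a b ha hb hab
    refine ⟨?_, ?_, ?_⟩ <;>
      simp only [Prod.fst_add, Prod.snd_add, Prod.smul_fst, Prod.smul_snd, smul_eq_mul] <;>
      nlinarith
  · rintro ⟨a, b⟩ ⟨ha, hb, hab⟩
    dsimp only at ha hb hab
    have hmem := (convex_convexHull ℝ {((0 : ℝ), (0 : ℝ)), (1, 0), (0, 1)}).sum_mem
      (t := Finset.univ) (w := ![1 - a - b, a, b]) (z := ![(0, 0), (1, 0), (0, 1)])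
      (by simp [Fin.forall_fin_succ]; exact ⟨by linarith, ha, hb⟩)
      (by simp [Fin.sum_univ_three]; ring)
      (fun i _ ↦ subset_convexHull ℝ _ (by fin_cases i <;> simp))
    simpa [Fin.sum_univ_three] using hmem

lemma posPart_add_posPart_le_one {a b : ℝ} (ha : a ≤ 1) (hb : b ≤ 1) (hab : a + b ≤ 1) :
    a⁺ + b⁺ ≤ 1 := by
  rcases le_total a 0 with h | h <;> rcases le_total b 0 with h' | h' <;> simp [*]

lemma unitTriangle_add_neg_eq_hexagon : unitTriangle + -unitTriangle = hexagon := by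
  apply Subset.antisymm
  · rintro _ ⟨p, ⟨hp1, hp2, hp3⟩, q, ⟨hq1, hq2, hq3⟩, rfl⟩
    simp only [Prod.fst_neg, Prod.snd_neg] at hq1 hq2 hq3
    refine ⟨abs_le.2 ⟨?_, ?_⟩, abs_le.2 ⟨?_, ?_⟩, abs_le.2 ⟨?_, ?_⟩⟩ <;>
      simp only [Prod.fst_add, Prod.snd_add] <;> linarith
  · rintro ⟨a, b⟩ ⟨ha, hb, hab⟩
    dsimp only at ha hb hab
    obtain ⟨ha1, ha2⟩ := abs_le.1 ha
    obtain ⟨hb1, hb2⟩ := abs_le.1 hb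
    obtain ⟨hab1, hab2⟩ := abs_le.1 hab
    refine ⟨(a⁺, b⁺), ⟨posPart_nonneg a, posPart_nonneg b, posPart_add_posPart_le_one ha2 hb2 hab2⟩,
      -(a⁻, b⁻), ⟨by simp, by simp, ?_⟩, by simp [← sub_eq_add_neg, posPart_sub_negPart]⟩
    simpa [negPart_def] using
      posPart_add_posPart_le_one (a := -a) (b := -b) (by linarith) (by linarith) (by linarith)

lemma measurableSet_hexagon : MeasurableSet hexagon := by
  unfold hexagon
  measurability

lemma volume_hexagon_slice (a : ℝ) :
    volume (Prod.mk a ⁻¹' hexagon) =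
      (Icc (-1) 1).indicator (fun x ↦ ENNReal.ofReal (2 - |x|)) a := by
  by_cases ha : |a| ≤ 1
  · have hslice : Prod.mk a ⁻¹' hexagon = Icc (max (-1) (-1 - a)) (min 1 (1 - a)) := by
      ext b
      simp only [hexagon, mem_preimage, mem_ofPred_eq, mem_Icc, max_le_iff, le_min_iff, abs_le]
      constructor
      · rintro ⟨-, ⟨hb1, hb2⟩, hab1, hab2⟩
        exact ⟨⟨hb1, by linarith⟩, hb2, by linarith⟩
      · rintro ⟨⟨hb1, hab1⟩, hb2, hab2⟩
        exact ⟨abs_le.1 ha, ⟨hb1, hb2⟩, by linarith, by linarith⟩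
    rw [hslice, Real.volume_Icc, indicator_of_mem (mem_Icc.2 (abs_le.1 ha))]
    congr 1
    rcases le_total a 0 with h | h
    · rw [min_eq_left (by linarith), max_eq_right (by linarith), abs_of_nonpos h]; ring
    · rw [min_eq_right (by linarith), max_eq_left (by linarith), abs_of_nonneg h]; ring
  · have hslice : Prod.mk a ⁻¹' hexagon = ∅ :=
      eq_empty_of_forall_notMem fun b hb ↦ ha hb.1
    rw [hslice, indicator_of_notMem (by simpa [← abs_le] using ha), measure_empty]

lemma integral_two_sub_abs : ∫ x in (-1 : ℝ)..1, (2 - |x|) = 3 := by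
  have hint : ∀ a b : ℝ, IntervalIntegrable (fun x ↦ 2 - |x|) volume a b :=
    fun a b ↦ (continuous_const.sub continuous_abs).intervalIntegrable a b
  have hsymm : ∫ x in (-1 : ℝ)..0, (2 - |x|) = ∫ x in (0 : ℝ)..1, (2 - |x|) := by
    simpa using (intervalIntegral.integral_comp_neg (a := 0) (b := 1) (fun x ↦ 2 - |x|)).symm
  have hhalf : ∫ x in (0 : ℝ)..1, (2 - |x|) = 3 / 2 := by
    rw [intervalIntegral.integral_congr (g := fun x ↦ 2 - x) fun x hx ↦ by
      rw [uIcc_of_le zero_le_one] at hx; simp [abs_of_nonneg hx.1]]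
    rw [intervalIntegral.integral_sub intervalIntegrable_const
      intervalIntegral.intervalIntegrable_id, intervalIntegral.integral_const, integral_id]
    norm_num
  rw [← intervalIntegral.integral_add_adjacent_intervals (hint _ 0) (hint 0 _), hsymm, hhalf]
  norm_num

lemma volume_hexagon : volume hexagon = 3 := by
  rw [Measure.volume_eq_prod, Measure.prod_apply measurableSet_hexagon]
  simp_rw [volume_hexagon_slice]
  rw [lintegral_indicator measurableSet_Icc, ← ofReal_integral_eq_lintegral_ofReal,
    integral_Icc_eq_integral_Ioc, ← intervalIntegral.integral_of_le (by norm_num),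
    integral_two_sub_abs, ENNReal.ofReal_ofNat]
  · exact (continuous_const.sub continuous_abs).integrableOn_Icc
  · filter_upwards [self_mem_ae_restrict measurableSet_Icc] with x hx
    exact sub_nonneg.2 ((abs_le.2 hx).trans one_le_two)

def splitLastCoord : EuclideanSpace ℝ (Fin 3) ≃ᵐ ℝ × (ℝ × ℝ) :=
  (MeasurableEquiv.toLp 2 (Fin 3 → ℝ)).symm.trans <|
    (MeasurableEquiv.piFinSuccAbove (fun _ ↦ ℝ) 2).trans <|
      MeasurableEquiv.prodCongr (MeasurableEquiv.refl ℝ) MeasurableEquiv.finTwoArrow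

@[simp]
lemma splitLastCoord_apply (x : EuclideanSpace ℝ (Fin 3)) :
    splitLastCoord x = (x 2, (x 0, x 1)) :=
  rfl

lemma measurePreserving_splitLastCoord : MeasurePreserving splitLastCoord :=
  (EuclideanSpace.volume_preserving_symm_measurableEquiv_toLp (Fin 3)).trans <|
    (volume_preserving_piFinSuccAbove (fun _ ↦ ℝ) 2).trans <|
      (MeasurePreserving.id volume).prod (volume_preserving_finTwoArrow ℝ)

lemma isLinearMap_splitLastCoord : IsLinearMap ℝ splitLastCoord :=
  ⟨fun _ _ ↦ rfl, fun _ _ ↦ rfl⟩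

lemma splitLastCoord_image_stdPrism :
    splitLastCoord '' stdPrism =
      Icc 0 1 ×ˢ convexHull ℝ {((0 : ℝ), (0 : ℝ)), (1, 0), (0, 1)} := by
  rw [stdPrism, isLinearMap_splitLastCoord.image_convexHull, ← segment_eq_Icc zero_le_one,
    ← convexHull_pair, ← convexHull_prod]
  congr 1
  ext p
  simp [image_insert_eq, insert_prod, singleton_prod, stdVec]
  tauto

/-- The volume of the difference body of the triangular prism equals `6`. -/
theorem stmt_11 : volume (stdPrism + -stdPrism) = 6 := by
  have hprod : splitLastCoord '' (stdPrism + -stdPrism) = Icc (-1) 1 ×ˢ hexagon := by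
    rw [isLinearMap_splitLastCoord.image_add_neg, splitLastCoord_image_stdPrism,
      convexHull_triangle_eq_unitTriangle, prod_add_neg_prod, Icc_add_neg_Icc zero_le_one,
      unitTriangle_add_neg_eq_hexagon]
    norm_num
  rw [← splitLastCoord.injective.preimage_image (stdPrism + -stdPrism),
    measurePreserving_splitLastCoord.measure_preimage_equiv, hprod, Measure.volume_eq_prod,
    Measure.prod_prod, Real.volume_Icc, volume_hexagon]
  norm_num
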